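/- Let γ > 1 and let π^ε ∈ C^∞([0,T−ε] × 𝕋ⁿ). For δ ≥ 0 small and t ∈ [0,T−ε], let K_*(δ,t) > 0 be determined by ∫_{𝕋ⁿ} (δ²π^ε(t,x) + K_*(δ,t))^{1/γ} dx = 1, and set ρ_δ(t,x) := (δ²π^ε(t,x) + K_*(δ,t))^{1/γ}. Then K_* is smooth in (δ,t) with K_*(0,t) = 1, and there exists a constant C = C(ε) (depending on π^ε but not on δ) such that for all sufficiently small δ > 0: ‖K_*(δ,·) − 1‖_{C⁰([0,T−ε])} ≤ Cδ, ‖∂_t K_*(δ,·)‖_{C⁰([0,T−ε])} ≤ Cδ, and ‖ρ_δ − 1‖_{C⁰([0,T−ε]×𝕋ⁿ)} + ‖∂_t ρ_δ‖_{L^∞([0,T−ε]×𝕋ⁿ)} + ‖∂_t² ρ_δ‖_{L^∞([0,T−ε]×𝕋ⁿ)} ≤ Cδ. -/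

import Mathlib

open MeasureTheory Filter

noncomputable section

/-- The unit cube `[0,1]ⁿ ⊆ ℝⁿ`, a fundamental domain for the torus `𝕋ⁿ = ℝⁿ/ℤⁿ`
(normalized to have total measure one). -/
def cube (n : ℕ) : Set (Fin n → ℝ) := Set.Icc 0 1

/-- `ℤⁿ`-periodicity: a function on `ℝⁿ` descends to the torus `𝕋ⁿ = ℝⁿ/ℤⁿ`. -/
def ZPer {n : ℕ} {E : Type*} (f : (Fin n → ℝ) → E) : Prop :=
  ∀ (x : Fin n → ℝ) (i : Fin n), f (x + Pi.single i 1) = f x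

/-- Spatial partial derivative `∂ᵢ f (x)` of a scalar function on `ℝⁿ`. -/
def pd {n : ℕ} (f : (Fin n → ℝ) → ℝ) (x : Fin n → ℝ) (i : Fin n) : ℝ :=
  fderiv ℝ f x (Pi.single i 1)

/-- The `n × n` identity matrix. -/
def idM (n : ℕ) : Fin n → Fin n → ℝ := fun i j => if i = j then 1 else 0

/-- Symmetry of an `n × n` matrix. -/
def symmM {n : ℕ} (A : Fin n → Fin n → ℝ) : Prop := ∀ i j, A i j = A j i

/-- Trace of an `n × n` matrix. -/
def traceM {n : ℕ} (A : Fin n → Fin n → ℝ) : ℝ := ∑ i, A i i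

/-- Positive definiteness of an `n × n` matrix. -/
def posdefM {n : ℕ} (A : Fin n → Fin n → ℝ) : Prop :=
  ∀ ξ : Fin n → ℝ, ξ ≠ 0 → 0 < ∑ i, ∑ j, ξ i * A i j * ξ j

/-- Positive semidefiniteness of an `n × n` matrix. -/
def possemidefM {n : ℕ} (A : Fin n → Fin n → ℝ) : Prop :=
  ∀ ξ : Fin n → ℝ, 0 ≤ ∑ i, ∑ j, ξ i * A i j * ξ j


/-!
For `|b| ≤ 1/8` and `α = 1/γ ∈ (0,1]`, the map `k ↦ ∫_{[0,1]ⁿ} (b + k)^α` increases on `[1/2, 2]`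
with slope at least `α 3^(α-1)` and crosses `1` inside `[7/8, 9/8]`; so `K_*` exists and is unique
there, and the implicit function theorem makes it smooth, the integral being smooth in all
parameters by differentiation under the integral sign. Periodicity makes `δ²π^ε` uniformly small
for small `δ`. At `δ = 0` we have `K_* = ρ_δ = 1`, so `K_*`, `ρ_δ` and their first two time
derivatives are smooth in `δ` and constant at `δ = 0`; their Lipschitz constants on the compact
convex set `[0,δ₁] × [0,T-ε] × [0,1]ⁿ` give the `O(δ)` bounds, and periodicity
extends these from the unit cube to all `x`.
-/

open Set Topology
open scoped ContDiff

section ParametricIntegral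

theorem continuousOn_integral_of_continuousOn_prod {E X Y : Type*}
    [TopologicalSpace E] [LocallyCompactSpace E] [FirstCountableTopology E]
    [TopologicalSpace X] [T2Space X] [SecondCountableTopology X] [MeasurableSpace X]
    [OpensMeasurableSpace X] {μ : Measure X} [IsFiniteMeasureOnCompacts μ]
    [NormedAddCommGroup Y] [NormedSpace ℝ Y] {S : Set X} {s : Set E} {F : E × X → Y}
    (hs : IsOpen s) (hS : IsCompact S) (hF : ContinuousOn F (s ×ˢ univ)) :
    ContinuousOn (fun p => ∫ x in S, F (p, x) ∂μ) s := by
  have hsU : IsOpen (s ×ˢ (univ : Set X)) := hs.prod isOpen_univ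
  intro p hp
  obtain ⟨K, hK, hpK, hKs⟩ := exists_compact_subset hs hp
  obtain ⟨C, hC⟩ := (hK.prod hS).exists_bound_of_continuousOn
    (hF.mono (prod_mono hKs (subset_univ S)))
  refine (continuousAt_of_dominated (bound := fun _ => C) ?_ ?_
    (integrableOn_const hS.measure_ne_top) ?_).continuousWithinAt
  · filter_upwards [hs.mem_nhds hp] with q hq
    exact (hF.comp_continuous (.prodMk_right q) fun x => ⟨hq, trivial⟩).aestronglyMeasurable
  · filter_upwards [mem_interior_iff_mem_nhds.1 hpK] with q hq
    exact (ae_restrict_iff' hS.measurableSet).2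
      (ae_of_all _ fun x hx => hC (q, x) ⟨hq, hx⟩)
  · exact ae_of_all _ fun x =>
      (hF.continuousAt (hsU.mem_nhds ⟨hp, trivial⟩)).comp
        (continuous_id.prodMk continuous_const).continuousAt

-- `E` and `Y` share a universe because the induction on the order of smoothness passes from `Y`
-- to `E →L[ℝ] Y`.
universe u

variable {E Y : Type u} [NormedAddCommGroup E] [NormedSpace ℝ E] [LocallyCompactSpace E]
  [NormedAddCommGroup Y] [NormedSpace ℝ Y]
  {X : Type*} [NormedAddCommGroup X] [NormedSpace ℝ X] [FiniteDimensional ℝ X]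
  [MeasurableSpace X] [OpensMeasurableSpace X] {μ : Measure X} [IsFiniteMeasureOnCompacts μ]
  {S : Set X} {s : Set E} {F : E × X → Y}

theorem hasFDerivAt_integral_of_contDiffOn_prod (hs : IsOpen s) (hS : IsCompact S)
    (hF : ContDiffOn ℝ 1 F (s ×ˢ univ)) {p : E} (hp : p ∈ s) :
    HasFDerivAt (fun p => ∫ x in S, F (p, x) ∂μ)
      (∫ x in S, fderiv ℝ F (p, x) ∘L ContinuousLinearMap.inl ℝ E X ∂μ) p := by
  have hsU : IsOpen (s ×ˢ (univ : Set X)) := hs.prod isOpen_univ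
  have hD : ContinuousOn (fun z => fderiv ℝ F z ∘L ContinuousLinearMap.inl ℝ E X)
      (s ×ˢ univ) :=
    ((hF.continuousOn_fderiv_of_isOpen hsU le_rfl).clm_comp continuousOn_const)
  obtain ⟨K, hK, hpK, hKs⟩ := exists_compact_subset hs hp
  obtain ⟨C, hC⟩ := (hK.prod hS).exists_bound_of_continuousOn
    (hD.mono (prod_mono hKs (subset_univ S)))
  refine hasFDerivAt_integral_of_dominated_of_fderiv_le (𝕜 := ℝ) (bound := fun _ => C)
    (F := fun q x => F (q, x)) (F' := fun q x => fderiv ℝ F (q, x) ∘L .inl ℝ E X)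
    (mem_interior_iff_mem_nhds.1 hpK) ?_ ?_ ?_ ?_ (integrableOn_const (μ := μ) hS.measure_ne_top) ?_
  · filter_upwards [hs.mem_nhds hp] with q hq
    exact (hF.continuousOn.comp_continuous (.prodMk_right q)
      fun x => ⟨hq, trivial⟩).aestronglyMeasurable
  · exact (hF.continuousOn.comp_continuous (.prodMk_right p)
      fun x => ⟨hp, trivial⟩).continuousOn.integrableOn_compact hS
  · exact (hD.comp_continuous (.prodMk_right p) fun x => ⟨hp, trivial⟩).aestronglyMeasurable
  · exact (ae_restrict_iff' hS.measurableSet).2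
      (ae_of_all _ fun x hx q hq => hC (q, x) ⟨hq, hx⟩)
  · refine ae_of_all _ fun x q hq => ?_
    have hFq : DifferentiableAt ℝ F (q, x) :=
      (hF.differentiableOn one_ne_zero).differentiableAt
        (hsU.mem_nhds ⟨hKs hq, trivial⟩)
    exact hFq.hasFDerivAt.comp q (hasFDerivAt_prodMk_left q x)

theorem contDiffOn_integral_of_contDiffOn_prod (hs : IsOpen s) (hS : IsCompact S) (k : ℕ)
    (hF : ContDiffOn ℝ k F (s ×ˢ univ)) :
    ContDiffOn ℝ k (fun p => ∫ x in S, F (p, x) ∂μ) s := by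
  induction k generalizing Y with
  | zero =>
    rw [CharP.cast_eq_zero, contDiffOn_zero] at hF ⊢
    exact continuousOn_integral_of_continuousOn_prod hs hS hF
  | succ k ih =>
    have hsU : IsOpen (s ×ˢ (univ : Set X)) := hs.prod isOpen_univ
    have hF1 : ContDiffOn ℝ 1 F (s ×ˢ univ) := hF.of_le (by exact_mod_cast Nat.le_add_left 1 k)
    have hD : ContDiffOn ℝ k (fun z => fderiv ℝ F z ∘L ContinuousLinearMap.inl ℝ E X)
        (s ×ˢ univ) :=
      (hF.fderiv_of_isOpen hsU (by push_cast; rfl)).clm_comp contDiffOn_const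
    rw [Nat.cast_succ, contDiffOn_succ_iff_fderiv_of_isOpen hs]
    refine ⟨fun p hp => (hasFDerivAt_integral_of_contDiffOn_prod hs hS hF1 hp).differentiableAt
      |>.differentiableWithinAt, by simp, ?_⟩
    exact (ih hD).congr fun p hp => (hasFDerivAt_integral_of_contDiffOn_prod hs hS hF1 hp).fderiv

theorem contDiffOn_integral_of_contDiffOn_prod_infty (hs : IsOpen s) (hS : IsCompact S)
    (hF : ContDiffOn ℝ ∞ F (s ×ˢ univ)) :
    ContDiffOn ℝ ∞ (fun p => ∫ x in S, F (p, x) ∂μ) s :=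
  contDiffOn_infty.2 fun k =>
    contDiffOn_integral_of_contDiffOn_prod hs hS k (hF.of_le (by exact_mod_cast le_top))

end ParametricIntegral

section Torus

variable {n : ℕ}

theorem volume_cube (n : ℕ) : volume (cube n) = 1 := by
  simp [cube, Real.volume_Icc_pi]

instance (n : ℕ) : IsProbabilityMeasure (volume.restrict (cube n)) :=
  ⟨by rw [Measure.restrict_apply_univ, volume_cube]⟩

theorem isCompact_cube (n : ℕ) : IsCompact (cube n) := isCompact_Icc

theorem convex_cube (n : ℕ) : Convex ℝ (cube n) := convex_Icc 0 1

theorem fract_mem_cube (x : Fin n → ℝ) : (fun i => Int.fract (x i)) ∈ cube n :=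
  ⟨fun _ => Int.fract_nonneg _, fun _ => (Int.fract_lt_one _).le⟩

theorem ZPer.periodic_intCast {E : Type*} {f : (Fin n → ℝ) → E} (hf : ZPer f)
    (m : Fin n → ℤ) : Function.Periodic f (fun i => (m i : ℝ)) := by
  have hsum : ∀ s : Finset (Fin n), Function.Periodic f (∑ i ∈ s, m i • Pi.single i (1 : ℝ)) := by
    intro s
    induction s using Finset.induction_on with
    | empty => simp [Function.Periodic]
    | insert i s hi ih =>
      rw [Finset.sum_insert hi]
      exact (Function.Periodic.zsmul (fun x => hf x i) (m i)).add_period ih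
  convert hsum Finset.univ using 1
  ext i
  simp [Finset.sum_apply, Pi.single_apply]

theorem ZPer.apply_fract {E : Type*} {f : (Fin n → ℝ) → E} (hf : ZPer f) (x : Fin n → ℝ) :
    f (fun i => Int.fract (x i)) = f x := by
  have hx : x = (fun i => Int.fract (x i)) + fun i => ((⌊x i⌋ : ℤ) : ℝ) := by
    ext i
    exact (Int.fract_add_floor (x i)).symm
  conv_rhs => rw [hx]
  exact (hf.periodic_intCast _ _).symm

theorem exists_norm_le_of_zPer {E Y : Type*} [TopologicalSpace E] [SeminormedAddCommGroup Y]
    {F : E × (Fin n → ℝ) → Y} (hF : Continuous F) (hper : ∀ p, ZPer fun x => F (p, x))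
    {K : Set E} (hK : IsCompact K) : ∃ M, ∀ p ∈ K, ∀ x, ‖F (p, x)‖ ≤ M := by
  obtain ⟨M, hM⟩ := (hK.prod (isCompact_cube n)).exists_bound_of_continuousOn hF.continuousOn
  refine ⟨M, fun p hp x => ?_⟩
  rw [← (hper p).apply_fract x]
  exact hM _ ⟨hp, fract_mem_cube x⟩

end Torus

theorem monotoneOn_rpow_sub_mul {α c : ℝ} (hα : 0 < α) (hα1 : α ≤ 1) :
    MonotoneOn (fun u => u ^ α - α * c ^ (α - 1) * u) (Ioc 0 c) := by
  refine monotoneOn_of_deriv_nonneg (convex_Ioc 0 c) ?_ ?_ ?_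
  · exact ((continuousOn_id.rpow_const fun _ _ => Or.inr hα.le).sub (by fun_prop))
  · rw [interior_Ioc]
    exact fun u hu => ((Real.differentiableAt_rpow_const_of_ne α hu.1.ne').sub
      (by fun_prop)).differentiableWithinAt
  · rw [interior_Ioc]
    intro u hu
    have hderiv : HasDerivAt (fun u => u ^ α - α * c ^ (α - 1) * u)
        (α * u ^ (α - 1) - α * c ^ (α - 1)) u := by
      simpa using (Real.hasDerivAt_rpow_const (Or.inl hu.1.ne')).fun_sub
        ((hasDerivAt_id u).const_mul (α * c ^ (α - 1)))
    rw [hderiv.deriv, sub_nonneg]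
    exact mul_le_mul_of_nonneg_left
      (Real.rpow_le_rpow_of_nonpos hu.1 hu.2.le (by linarith)) hα.le

theorem contDiffAt_of_locally_unique_solution {E : Type*} [NormedAddCommGroup E]
    [NormedSpace ℝ E] [CompleteSpace E] {f : E × ℝ → ℝ} {g : E → ℝ} {x₀ : E} {s : Set ℝ}
    {m : WithTop ℕ∞} (hf : ContDiffAt ℝ m f (x₀, g x₀)) (hm : m ≠ 0)
    (hf' : fderiv ℝ f (x₀, g x₀) (0, 1) ≠ 0) (hs : s ∈ 𝓝 (g x₀))
    (hg : ∀ᶠ x in 𝓝 x₀, ∀ k ∈ s, f (x, k) = f (x₀, g x₀) → g x = k) :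
    ContDiffAt ℝ m g x₀ := by
  have hinv : (fderiv ℝ f (x₀, g x₀) ∘L .inr ℝ E ℝ).IsInvertible := by
    refine ⟨ContinuousLinearEquiv.unitsEquivAut ℝ (Units.mk0 _ hf'), ?_⟩
    ext
    simp
  have hψ := hf.contDiffAt_implicitFunction hm hinv
  have hψs : ∀ᶠ x in 𝓝 x₀, hf.implicitFunction hm hinv x ∈ s :=
    hψ.continuousAt.preimage_mem_nhds (by rwa [hf.implicitFunction_apply_self hm hinv])
  refine hψ.congr_of_eventuallyEq ?_
  filter_upwards [hg, hψs, hf.eventually_apply_implicitFunction hm hinv] with x hgx hx hfx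
  exact hgx _ hx hfx

section DensityMass

variable {n : ℕ} {α : ℝ} {β : (Fin n → ℝ) → ℝ}

-- The mass `∫_{𝕋ⁿ} (β + k)^α`; `K_*(δ,t)` is the root `k` of
-- `densityMass (1/γ) (δ²π^ε(t,·)) k = 1`.
def densityMass (α : ℝ) (β : (Fin n → ℝ) → ℝ) (k : ℝ) : ℝ :=
  ∫ x in cube n, (β x + k) ^ α

theorem integrableOn_rpow_add (hβ : ContinuousOn β (cube n)) (hα : 0 ≤ α) (k : ℝ) :
    IntegrableOn (fun x => (β x + k) ^ α) (cube n) :=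
  ((hβ.add continuousOn_const).rpow_const fun _ _ => Or.inr hα).integrableOn_compact
    (isCompact_cube n)

theorem densityMass_mem_Icc (hβ : ContinuousOn β (cube n)) (hβs : ∀ x ∈ cube n, |β x| ≤ 1 / 8)
    (hα : 0 ≤ α) {k : ℝ} (hk : 1 / 8 ≤ k) :
    densityMass α β k ∈ Icc ((k - 1 / 8) ^ α) ((k + 1 / 8) ^ α) := by
  have hcube := (isCompact_cube n).measurableSet
  constructor
  · calc (k - 1 / 8) ^ α = ∫ _ in cube n, (k - 1 / 8) ^ α := by simp
      _ ≤ densityMass α β k :=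
        setIntegral_mono_on (integrableOn_const (isCompact_cube n).measure_ne_top)
          (integrableOn_rpow_add hβ hα k) hcube fun x hx => Real.rpow_le_rpow (by linarith)
            (by linarith [(abs_le.1 (hβs x hx)).1]) hα
  · calc densityMass α β k ≤ ∫ _ in cube n, (k + 1 / 8) ^ α :=
        setIntegral_mono_on (integrableOn_rpow_add hβ hα k)
          (integrableOn_const (isCompact_cube n).measure_ne_top) hcube fun x hx =>
            Real.rpow_le_rpow (by linarith [(abs_le.1 (hβs x hx)).1])
              (by linarith [(abs_le.1 (hβs x hx)).2]) hα
      _ = (k + 1 / 8) ^ α := by simp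

theorem exists_densityMass_eq_one (hβ : ContinuousOn β (cube n))
    (hβs : ∀ x ∈ cube n, |β x| ≤ 1 / 8) (hα : 0 ≤ α)
    (hcont : ContinuousOn (densityMass α β) (Icc (7 / 8) (9 / 8))) :
    ∃ k ∈ Icc (7 / 8 : ℝ) (9 / 8), densityMass α β k = 1 := by
  refine intermediate_value_Icc (by norm_num) hcont ⟨?_, ?_⟩
  · convert (densityMass_mem_Icc hβ hβs hα (k := 7 / 8) (by norm_num)).2 using 1
    norm_num
  · convert (densityMass_mem_Icc hβ hβs hα (k := 9 / 8) (by norm_num)).1 using 1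
    norm_num

theorem mul_sub_le_densityMass_sub (hβ : ContinuousOn β (cube n))
    (hβs : ∀ x ∈ cube n, |β x| ≤ 1 / 8) (hα : 0 < α) (hα1 : α ≤ 1) {k k' : ℝ} (hk : 1 / 2 ≤ k)
    (hkk' : k ≤ k') (hk' : k' ≤ 2) :
    α * 3 ^ (α - 1) * (k' - k) ≤ densityMass α β k' - densityMass α β k := by
  unfold densityMass
  rw [← integral_sub (integrableOn_rpow_add hβ hα.le k') (integrableOn_rpow_add hβ hα.le k)]
  calc α * 3 ^ (α - 1) * (k' - k) = ∫ _ in cube n, α * 3 ^ (α - 1) * (k' - k) := by simp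
    _ ≤ _ := by
      refine setIntegral_mono_on (integrableOn_const (isCompact_cube n).measure_ne_top)
        ((integrableOn_rpow_add hβ hα.le k').sub (integrableOn_rpow_add hβ hα.le k))
        (isCompact_cube n).measurableSet fun x hx => ?_
      obtain ⟨hβl, hβu⟩ := abs_le.1 (hβs x hx)
      have := monotoneOn_rpow_sub_mul (c := 3) hα hα1 ⟨by linarith, by linarith⟩
        ⟨by linarith, by linarith⟩ (by linarith : β x + k ≤ β x + k')
      simp only at this
      linarith

theorem monotoneOn_densityMass_sub_mul (hβ : ContinuousOn β (cube n))
    (hβs : ∀ x ∈ cube n, |β x| ≤ 1 / 8) (hα : 0 < α) (hα1 : α ≤ 1) :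
    MonotoneOn (fun k => densityMass α β k - α * 3 ^ (α - 1) * k) (Icc (1 / 2) 2) :=
  fun k hk k' hk' hkk' => by
    have := mul_sub_le_densityMass_sub hβ hβs hα hα1 hk.1 hkk' hk'.2
    linarith

theorem densityMass_injOn (hβ : ContinuousOn β (cube n)) (hβs : ∀ x ∈ cube n, |β x| ≤ 1 / 8)
    (hα : 0 < α) (hα1 : α ≤ 1) : InjOn (densityMass α β) (Icc (1 / 2) 2) := by
  refine StrictMonoOn.injOn fun k hk k' hk' hkk' => ?_
  have hslope : 0 < α * 3 ^ (α - 1) := by positivity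
  have := mul_sub_le_densityMass_sub hβ hβs hα hα1 hk.1 hkk'.le hk'.2
  nlinarith

theorem mul_le_of_hasDerivAt_densityMass (hβ : ContinuousOn β (cube n))
    (hβs : ∀ x ∈ cube n, |β x| ≤ 1 / 8) (hα : 0 < α) (hα1 : α ≤ 1) {k a : ℝ}
    (hd : HasDerivAt (densityMass α β) a k) (hk : k ∈ Ioo (1 / 2) 2) :
    α * 3 ^ (α - 1) ≤ a := by
  have hacc : AccPt k (𝓟 (Icc (1 / 2 : ℝ) 2)) :=
    uniqueDiffWithinAt_iff_accPt.1 (uniqueDiffOn_Icc (by norm_num) k (Ioo_subset_Icc_self hk))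
  have := (hd.sub ((hasDerivAt_id k).const_mul (α * 3 ^ (α - 1)))).hasDerivWithinAt
    |>.nonneg_of_monotoneOn hacc (monotoneOn_densityMass_sub_mul hβ hβs hα hα1)
  simpa using this

end DensityMass

section NormalizingConstant

variable {P : Type} [NormedAddCommGroup P] [NormedSpace ℝ P] [FiniteDimensional ℝ P] {n : ℕ}
  {α : ℝ} {b : P × (Fin n → ℝ) → ℝ} {V : Set P}

theorem contDiffOn_densityMass (hV : IsOpen V) (hb : ContDiffOn ℝ ∞ b (V ×ˢ univ))
    (hbs : ∀ q ∈ V, ∀ x, |b (q, x)| ≤ 1 / 8) :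
    ContDiffOn ℝ ∞ (fun z : P × ℝ => densityMass α (fun x => b (z.1, x)) z.2)
      (V ×ˢ Ioi (1 / 4)) := by
  have hbase : ContDiffOn ℝ ∞ (fun z : (P × ℝ) × (Fin n → ℝ) => b (z.1.1, z.2) + z.1.2)
      ((V ×ˢ Ioi (1 / 4)) ×ˢ univ) :=
    (hb.comp (by fun_prop : ContDiff ℝ ∞ fun z : (P × ℝ) × (Fin n → ℝ) => (z.1.1, z.2)).contDiffOn
      fun z hz => ⟨hz.1.1, trivial⟩).add (by fun_prop : ContDiff ℝ ∞ _).contDiffOn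
  refine contDiffOn_integral_of_contDiffOn_prod_infty (μ := volume)
    (F := fun z : (P × ℝ) × (Fin n → ℝ) => (b (z.1.1, z.2) + z.1.2) ^ α)
    (hV.prod isOpen_Ioi) (isCompact_cube n) (hbase.rpow_const_of_ne fun z hz => ?_)
  have hk : (1 / 4 : ℝ) < z.1.2 := hz.1.2
  linarith [(abs_le.1 (hbs _ hz.1.1 z.2)).1]

theorem exists_contDiffOn_normalizingConstant (hα : 0 < α) (hα1 : α ≤ 1) (hV : IsOpen V)
    (hb : ContDiffOn ℝ ∞ b (V ×ˢ univ)) (hbs : ∀ q ∈ V, ∀ x, |b (q, x)| ≤ 1 / 8) :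
    ∃ K : P → ℝ, ContDiffOn ℝ ∞ K V ∧
      ∀ q ∈ V, K q ∈ Icc (7 / 8) (9 / 8) ∧ densityMass α (fun x => b (q, x)) (K q) = 1 := by
  set H : P × ℝ → ℝ := fun z => densityMass α (fun x => b (z.1, x)) z.2
  have hH : ContDiffOn ℝ ∞ H (V ×ˢ Ioi (1 / 4)) := contDiffOn_densityMass hV hb hbs
  have hβ : ∀ q ∈ V, ContinuousOn (fun x => b (q, x)) (cube n) := fun q hq =>
    (hb.continuousOn.comp_continuous (.prodMk_right q) fun _ => ⟨hq, trivial⟩).continuousOn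
  have hβs : ∀ q ∈ V, ∀ x ∈ cube n, |b (q, x)| ≤ 1 / 8 := fun q hq x _ => hbs q hq x
  have hex : ∀ q ∈ V, ∃ k ∈ Icc (7 / 8 : ℝ) (9 / 8), H (q, k) = 1 := fun q hq =>
    exists_densityMass_eq_one (hβ q hq) (hβs q hq) hα.le <|
      hH.continuousOn.comp (Continuous.prodMk_right q).continuousOn
        fun k hk => ⟨hq, show (1 / 4 : ℝ) < k by linarith [hk.1]⟩
  choose! K hKmem hK using hex
  refine ⟨K, fun q hq => ?_, fun q hq => ⟨hKmem q hq, hK q hq⟩⟩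
  have hHq : ContDiffAt ℝ ∞ H (q, K q) := hH.contDiffAt <| (hV.prod isOpen_Ioi).mem_nhds
    ⟨hq, show (1 / 4 : ℝ) < K q by linarith [(hKmem q hq).1]⟩
  have hKq : K q ∈ Ioo (1 / 2 : ℝ) 2 := ⟨by linarith [(hKmem q hq).1], by linarith [(hKmem q hq).2]⟩
  refine (contDiffAt_of_locally_unique_solution hHq (by simp) ?_ (isOpen_Ioo.mem_nhds hKq)
    ?_).contDiffWithinAt
  · have hd : HasDerivAt (densityMass α fun x => b (q, x)) (fderiv ℝ H (q, K q) (0, 1)) (K q) :=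
      (hHq.differentiableAt (by simp)).hasFDerivAt.comp_hasDerivAt (K q)
        ((hasDerivAt_const _ q).prodMk (hasDerivAt_id _))
    have hslope : 0 < α * 3 ^ (α - 1) := by positivity
    exact (hslope.trans_le
      (mul_le_of_hasDerivAt_densityMass (hβ q hq) (hβs q hq) hα hα1 hd hKq)).ne'
  · filter_upwards [hV.mem_nhds hq] with q' hq' k hk hHk
    rw [hK q hq] at hHk
    exact densityMass_injOn (hβ q' hq') (hβs q' hq') hα hα1
      (Icc_subset_Icc (by norm_num) (by norm_num) (hKmem q' hq')) (Ioo_subset_Icc_self hk)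
      ((hK q' hq').trans hHk.symm)

end NormalizingConstant

section TimeDerivative

variable {W F : Type*} [NormedAddCommGroup F] [NormedSpace ℝ F] {G : ℝ × ℝ × W → F}
  {U : Set (ℝ × ℝ × W)}

def timeDeriv (G : ℝ × ℝ × W → F) (z : ℝ × ℝ × W) : F :=
  deriv (fun s => G (z.1, s, z.2.2)) z.2.1

theorem timeDeriv_eq_zero_of_eq_const [TopologicalSpace W] (hU : IsOpen U) {c : F}
    (hG : ∀ t w, (0, t, w) ∈ U → G (0, t, w) = c) :
    ∀ t w, (0, t, w) ∈ U → timeDeriv G (0, t, w) = 0 := by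
  intro t w hz
  have hconst : (fun s => G (0, s, w)) =ᶠ[𝓝 t] fun _ => c := by
    filter_upwards [(hU.preimage (by fun_prop : Continuous fun s : ℝ => ((0 : ℝ), s, w))).mem_nhds
      hz] with s hs using hG s w hs
  simp [timeDeriv, hconst.deriv_eq]

variable [NormedAddCommGroup W] [NormedSpace ℝ W]

theorem timeDeriv_eq_fderiv {z : ℝ × ℝ × W} (hG : DifferentiableAt ℝ G z) :
    timeDeriv G z = fderiv ℝ G z (0, 1, 0) := by
  obtain ⟨δ, t, w⟩ := z
  exact (hG.hasFDerivAt.comp_hasDerivAt t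
    ((hasDerivAt_const t δ).prodMk ((hasDerivAt_id t).prodMk (hasDerivAt_const t w)))).deriv

theorem ContDiffOn.timeDeriv {m : WithTop ℕ∞} (hU : IsOpen U) (hG : ContDiffOn ℝ (m + 1) G U) :
    ContDiffOn ℝ m (timeDeriv G) U :=
  ((hG.fderiv_of_isOpen hU le_rfl).clm_apply contDiffOn_const).congr fun _ hz =>
    timeDeriv_eq_fderiv ((hG.differentiableOn (by simp)).differentiableAt (hU.mem_nhds hz))

theorem exists_norm_sub_le_of_contDiffOn {G : ℝ × W → F} {R : Set (ℝ × W)} (hR : Convex ℝ R)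
    (hR' : IsCompact R) (hG : ContDiffOn ℝ 1 G R) :
    ∃ C > 0, ∀ δ w, (δ, w) ∈ R → (0, w) ∈ R → ‖G (δ, w) - G (0, w)‖ ≤ C * |δ| := by
  obtain ⟨L, hL⟩ := hG.exists_lipschitzOnWith one_ne_zero hR hR'
  refine ⟨L + 1, by positivity, fun δ w h h0 => ?_⟩
  have := hL.dist_le_mul _ h _ h0
  rw [dist_eq_norm, Prod.dist_eq, dist_self, Real.dist_eq, sub_zero,
    max_eq_left (abs_nonneg δ)] at this
  exact this.trans (by gcongr; linarith)

theorem exists_bound_of_eq_const_at_zero (hU : IsOpen U) (hG : ContDiffOn ℝ 3 G U) {c : F}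
    (hG0 : ∀ t w, (0, t, w) ∈ U → G (0, t, w) = c) {a : ℝ} {S : Set (ℝ × W)}
    (hS : Convex ℝ S) (hS' : IsCompact S) (hSU : Icc 0 a ×ˢ S ⊆ U) :
    ∃ C > 0, ∀ δ ∈ Icc 0 a, ∀ w ∈ S, ‖G (δ, w) - c‖ ≤ C * δ ∧
      ‖timeDeriv G (δ, w)‖ ≤ C * δ ∧ ‖timeDeriv (timeDeriv G) (δ, w)‖ ≤ C * δ := by
  have hG1 : ContDiffOn ℝ 2 (timeDeriv G) U := ContDiffOn.timeDeriv hU hG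
  have hG2 : ContDiffOn ℝ 1 (timeDeriv (timeDeriv G)) U := hG1.timeDeriv hU
  have hG1_0 := timeDeriv_eq_zero_of_eq_const hU hG0
  have hG2_0 := timeDeriv_eq_zero_of_eq_const hU hG1_0
  have hR := (convex_Icc 0 a).prod hS
  have hR' := (isCompact_Icc (a := 0) (b := a)).prod hS'
  obtain ⟨C₀, hC₀, h₀⟩ :=
    exists_norm_sub_le_of_contDiffOn hR hR' ((hG.of_le (by norm_num)).mono hSU)
  obtain ⟨C₁, hC₁, h₁⟩ :=
    exists_norm_sub_le_of_contDiffOn hR hR' ((hG1.of_le (by norm_num)).mono hSU)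
  obtain ⟨C₂, hC₂, h₂⟩ := exists_norm_sub_le_of_contDiffOn hR hR' (hG2.mono hSU)
  refine ⟨max C₀ (max C₁ C₂), by positivity, fun δ hδ w hw => ?_⟩
  obtain ⟨t, x⟩ := w
  have hz : (δ, t, x) ∈ Icc 0 a ×ˢ S := ⟨hδ, hw⟩
  have hz0 : ((0 : ℝ), t, x) ∈ Icc 0 a ×ˢ S := ⟨⟨le_rfl, hδ.1.trans hδ.2⟩, hw⟩
  have hmono : ∀ {C : ℝ} {u : F}, C ≤ max C₀ (max C₁ C₂) → ‖u‖ ≤ C * |δ| →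
      ‖u‖ ≤ max C₀ (max C₁ C₂) * δ := fun hC hu => by
    rw [abs_of_nonneg hδ.1] at hu
    exact hu.trans (mul_le_mul_of_nonneg_right hC hδ.1)
  refine ⟨?_, ?_, ?_⟩
  · refine hmono (le_max_left _ _) ?_
    simpa [hG0 t x (hSU hz0)] using h₀ δ (t, x) hz hz0
  · refine hmono ((le_max_left _ _).trans (le_max_right _ _)) ?_
    simpa [hG1_0 t x (hSU hz0)] using h₁ δ (t, x) hz hz0
  · refine hmono ((le_max_right _ _).trans (le_max_right _ _)) ?_
    simpa [hG2_0 t x (hSU hz0)] using h₂ δ (t, x) hz hz0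

end TimeDerivative

theorem exists_normalizingConstant_of_zPer {n : ℕ} {α : ℝ} (hα : 0 < α) (hα1 : α ≤ 1)
    {πε : ℝ × (Fin n → ℝ) → ℝ} (hπ : ContDiff ℝ ∞ πε) (hπ_per : ∀ t, ZPer fun x => πε (t, x))
    (a b : ℝ) :
    ∃ δ₂ > 0, ∃ K : ℝ × ℝ → ℝ, ContDiffOn ℝ ∞ K (Ioo (-δ₂) δ₂ ×ˢ Ioo a b) ∧
      ContDiffOn ℝ ∞ (fun z : ℝ × ℝ × (Fin n → ℝ) =>
        (z.1 ^ 2 * πε (z.2.1, z.2.2) + K (z.1, z.2.1)) ^ α) (Ioo (-δ₂) δ₂ ×ˢ Ioo a b ×ˢ univ) ∧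
      ∀ q ∈ Ioo (-δ₂) δ₂ ×ˢ Ioo a b, 0 < K q ∧
        densityMass α (fun x => q.1 ^ 2 * πε (q.2, x)) (K q) = 1 ∧ (q.1 = 0 → K q = 1) := by
  obtain ⟨M, hM⟩ := exists_norm_le_of_zPer hπ.continuous hπ_per (isCompact_Icc (a := a) (b := b))
  obtain ⟨δ₂, hδ₂, hδ₂M⟩ : ∃ δ₂ > 0, ∀ δ : ℝ, dist δ 0 < δ₂ → δ ^ 2 * M ≤ 1 / 8 :=
    Metric.eventually_nhds_iff.1 <| ((continuous_pow 2).mul continuous_const).tendsto' 0 0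
      (by simp) |>.eventually (ge_mem_nhds (by norm_num))
  set V := Ioo (-δ₂) δ₂ ×ˢ Ioo a b
  have hsmall : ∀ q ∈ V, ∀ x, |q.1 ^ 2 * πε (q.2, x)| ≤ 1 / 8 := fun q hq x => by
    rw [abs_mul, abs_sq]
    exact (mul_le_mul_of_nonneg_left (hM q.2 (Ioo_subset_Icc_self hq.2) x) (sq_nonneg _)).trans
      (hδ₂M q.1 (by rw [Real.dist_0_eq_abs]; exact abs_lt.2 hq.1))
  obtain ⟨K, hK, hKV⟩ := exists_contDiffOn_normalizingConstant hα hα1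
    (isOpen_Ioo.prod isOpen_Ioo) (b := fun z : (ℝ × ℝ) × (Fin n → ℝ) => z.1.1 ^ 2 * πε (z.1.2, z.2))
    (ContDiff.contDiffOn (by fun_prop))
    hsmall
  have hπc := hπ.continuous
  refine ⟨δ₂, hδ₂, K, hK, ?_, fun q hq => ⟨by linarith [(hKV q hq).1.1], (hKV q hq).2,
    fun hq0 => ?_⟩⟩
  · refine ContDiffOn.rpow_const_of_ne ?_ fun z hz => ?_
    · exact (by fun_prop : ContDiff ℝ ∞ fun z : ℝ × ℝ × (Fin n → ℝ) => z.1 ^ 2 * πε (z.2.1, z.2.2))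
        |>.contDiffOn.add <| hK.comp (by fun_prop : ContDiff ℝ ∞ fun z : ℝ × ℝ × (Fin n → ℝ) =>
          (z.1, z.2.1)).contDiffOn fun z hz => ⟨hz.1, hz.2.1⟩
    · have hq : (z.1, z.2.1) ∈ V := ⟨hz.1, hz.2.1⟩
      linarith [(abs_le.1 (hsmall _ hq z.2.2)).1, (hKV _ hq).1.1]
  · obtain ⟨δ, t⟩ := q
    simp only at hq0
    subst hq0
    refine densityMass_injOn (β := fun x => (0 : ℝ) ^ 2 * πε (t, x)) (by fun_prop)
      (fun x _ => by simp) hα hα1 (Icc_subset_Icc (by norm_num) (by norm_num) (hKV _ hq).1)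
      (by norm_num) ?_
    rw [show densityMass α (fun x => (0 : ℝ) ^ 2 * πε (t, x)) (K (0, t)) = 1 from (hKV _ hq).2]
    simp [densityMass]

theorem normalizing_constant_regularity_general
    (n : ℕ) (γ : ℝ) (hγ : 1 < γ) (T ε : ℝ)
    (πε : ℝ × (Fin n → ℝ) → ℝ) (hπ : ContDiff ℝ (⊤ : ℕ∞) πε)
    (hπ_per : ∀ t, ZPer (fun x => πε (t, x))) :
    ∃ δ₁ : ℝ, 0 < δ₁ ∧
    ∃ K : ℝ → ℝ → ℝ,
      -- `K_*(δ,t)` is determined by the unit-average condition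
      (∀ δ ∈ Set.Icc (0:ℝ) δ₁, ∀ t ∈ Set.Icc (0:ℝ) (T - ε),
        0 < K δ t ∧
        (∫ x in cube n, (δ ^ 2 * πε (t, x) + K δ t) ^ (1 / γ)) = 1) ∧
      -- smoothness of `K_*` in `(δ, t)`
      ContDiffOn ℝ (⊤ : ℕ∞) (fun q : ℝ × ℝ => K q.1 q.2)
        (Set.Icc (0:ℝ) δ₁ ×ˢ Set.Icc (0:ℝ) (T - ε)) ∧
      -- `K_*(0,t) = 1`
      (∀ t ∈ Set.Icc (0:ℝ) (T - ε), K 0 t = 1) ∧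
      -- `O(δ)` bounds, with `C = C(ε)` independent of `δ`
      ∃ C : ℝ, 0 < C ∧
        ∀ δ : ℝ, 0 < δ → δ ≤ δ₁ →
          (∀ t ∈ Set.Icc (0:ℝ) (T - ε),
            |K δ t - 1| ≤ C * δ ∧ |deriv (K δ) t| ≤ C * δ) ∧
          (∀ t ∈ Set.Icc (0:ℝ) (T - ε), ∀ x : Fin n → ℝ,
            |(δ ^ 2 * πε (t, x) + K δ t) ^ (1 / γ) - 1| ≤ C * δ ∧
            |deriv (fun s => (δ ^ 2 * πε (s, x) + K δ s) ^ (1 / γ)) t| ≤ C * δ ∧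
            |deriv (fun s =>
                deriv (fun r => (δ ^ 2 * πε (r, x) + K δ r) ^ (1 / γ)) s) t|
              ≤ C * δ) := by
  obtain ⟨δ₂, hδ₂, K, hK, hρ, hKV⟩ := exists_normalizingConstant_of_zPer (by positivity)
    ((div_le_one (by linarith)).2 hγ.le) hπ hπ_per (-1) (T - ε + 1)
  have hδ : Icc 0 (δ₂ / 2) ⊆ Ioo (-δ₂) δ₂ := Icc_subset_Ioo (by linarith) (by linarith)
  have ht : Icc 0 (T - ε) ⊆ Ioo (-1) (T - ε + 1) := Icc_subset_Ioo (by norm_num) (by linarith)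
  have hR := prod_mono hδ ht
  have hRU := prod_mono hδ (prod_mono ht (subset_univ (cube n)))
  have hU : IsOpen (Ioo (-δ₂) δ₂ ×ˢ Ioo (-1) (T - ε + 1) ×ˢ (univ : Set (Fin n → ℝ))) :=
    isOpen_Ioo.prod (isOpen_Ioo.prod isOpen_univ)
  have hS := (convex_Icc 0 (T - ε)).prod (convex_cube n)
  have hS' := (isCompact_Icc (a := 0) (b := T - ε)).prod (isCompact_cube n)
  obtain ⟨C₁, hC₁, hKbound⟩ := exists_bound_of_eq_const_at_zero hU
    ((hK.comp (by fun_prop : ContDiff ℝ ∞ fun z : ℝ × ℝ × (Fin n → ℝ) => (z.1, z.2.1)).contDiffOn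
      fun z hz => ⟨hz.1, hz.2.1⟩).of_le (by norm_cast)) (c := 1)
    (fun t x hz => (hKV (0, t) ⟨hz.1, hz.2.1⟩).2.2 rfl) hS hS' hRU
  obtain ⟨C₂, hC₂, hρbound⟩ := exists_bound_of_eq_const_at_zero hU
    (hρ.of_le (by norm_cast)) (c := 1)
    (fun t x hz => by simp [(hKV (0, t) ⟨hz.1, hz.2.1⟩).2.2 rfl]) hS hS' hRU
  refine ⟨δ₂ / 2, by positivity, fun δ t => K (δ, t),
    fun δ hδ t ht => (hKV _ (hR ⟨hδ, ht⟩)).imp_right And.left, hK.mono hR,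
    fun t ht => (hKV _ (hR ⟨⟨le_rfl, by positivity⟩, ht⟩)).2.2 rfl, max C₁ C₂,
    lt_max_of_lt_left hC₁, fun δ hδ hδ₁ => ?_⟩
  have hC : ∀ {C u : ℝ}, C ≤ max C₁ C₂ → ‖u‖ ≤ C * δ → |u| ≤ max C₁ C₂ * δ := fun hC hu =>
    (Real.norm_eq_abs _ ▸ hu).trans (mul_le_mul_of_nonneg_right hC hδ.le)
  refine ⟨fun t ht => ?_, fun t ht x => ?_⟩
  · obtain ⟨h0, h1, -⟩ := hKbound δ ⟨hδ.le, hδ₁⟩ (t, 0) ⟨ht, le_rfl, zero_le_one⟩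
    exact ⟨hC (le_max_left _ _) h0, hC (le_max_left _ _) h1⟩
  · obtain ⟨y, hy, hyx⟩ : ∃ y ∈ cube n, ∀ s, πε (s, y) = πε (s, x) :=
      ⟨_, fract_mem_cube x, fun s => (hπ_per s).apply_fract x⟩
    obtain ⟨h0, h1, h2⟩ := hρbound δ ⟨hδ.le, hδ₁⟩ (t, y) ⟨ht, hy⟩
    simp only [timeDeriv, hyx] at h0 h1 h2
    exact ⟨hC (le_max_right _ _) h0, hC (le_max_right _ _) h1, hC (le_max_right _ _) h2⟩

/-- regularity and asymptotics of the normalizing constant `K_*` and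
the density `ρ_δ = (δ²π^ε + K_*)^{1/γ}`: `K_*` is smooth in `(δ,t)`, `K_*(0,t) = 1`, and
`‖K_* - 1‖ + ‖∂ₜK_*‖ + ‖ρ_δ - 1‖ + ‖∂ₜρ_δ‖ + ‖∂ₜ²ρ_δ‖ = O(δ)`. -/
theorem normalizing_constant_regularity
    (n : ℕ) (γ : ℝ) (hγ : 1 < γ) (T ε : ℝ) (hε : 0 < ε) (hεT : ε < T)
    (πε : ℝ × (Fin n → ℝ) → ℝ) (hπ : ContDiff ℝ (⊤ : ℕ∞) πε)
    (hπ_per : ∀ t, ZPer (fun x => πε (t, x))) :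
    ∃ δ₁ : ℝ, 0 < δ₁ ∧
    ∃ K : ℝ → ℝ → ℝ,
      -- `K_*(δ,t)` is determined by the unit-average condition
      (∀ δ ∈ Set.Icc (0:ℝ) δ₁, ∀ t ∈ Set.Icc (0:ℝ) (T - ε),
        0 < K δ t ∧
        (∫ x in cube n, (δ ^ 2 * πε (t, x) + K δ t) ^ (1 / γ)) = 1) ∧
      -- smoothness of `K_*` in `(δ, t)`
      ContDiffOn ℝ (⊤ : ℕ∞) (fun q : ℝ × ℝ => K q.1 q.2)
        (Set.Icc (0:ℝ) δ₁ ×ˢ Set.Icc (0:ℝ) (T - ε)) ∧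
      -- `K_*(0,t) = 1`
      (∀ t ∈ Set.Icc (0:ℝ) (T - ε), K 0 t = 1) ∧
      -- `O(δ)` bounds, with `C = C(ε)` independent of `δ`
      ∃ C : ℝ, 0 < C ∧
        ∀ δ : ℝ, 0 < δ → δ ≤ δ₁ →
          (∀ t ∈ Set.Icc (0:ℝ) (T - ε),
            |K δ t - 1| ≤ C * δ ∧ |deriv (K δ) t| ≤ C * δ) ∧
          (∀ t ∈ Set.Icc (0:ℝ) (T - ε), ∀ x : Fin n → ℝ,
            |(δ ^ 2 * πε (t, x) + K δ t) ^ (1 / γ) - 1| ≤ C * δ ∧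
            |deriv (fun s => (δ ^ 2 * πε (s, x) + K δ s) ^ (1 / γ)) t| ≤ C * δ ∧
            |deriv (fun s =>
                deriv (fun r => (δ ^ 2 * πε (r, x) + K δ r) ^ (1 / γ)) s) t|
              ≤ C * δ) :=
  normalizing_constant_regularity_general n γ hγ T ε πε hπ hπ_per
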